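/- arXiv:2108.05668 — 2 statements merged into one kernel-verified Lean document; each statement's English description precedes it below -/
import Mathlib

section
/- Let 0 < α < 1, λ ∈ ℝ, b_0 ∈ ℝ, and define y(t) = b_0 t^{α−1} E_{α,α}(λ t^α) for t > 0, where E_{α,β}(z) = Σ_{m=0}^∞ z^m / Γ(αm + β). Then y solves the initial-value problem for the Riemann–Liouville fractional relaxation equation: for every t > 0, the function s ↦ (I^{1−α}_{0+} y)(s) is differentiable at t with d/dt (I^{1−α}_{0+} y)(t) = λ y(t), and lim_{t→0+} (I^{1−α}_{0+} y)(t) = b_0. -/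
/-- The Laplace convolution `(f ∗ g)(t) = ∫_0^t f(t−τ) g(τ) dτ`. -/
noncomputable def lconv (f g : ℝ → ℝ) : ℝ → ℝ :=
  fun t => ∫ τ in (0:ℝ)..t, f (t - τ) * g τ

/-- `convNPow f j` is the `(j+1)`-st convolution power `f^{⟨j+1⟩}`
(so `convNPow f 0 = f^{⟨1⟩} = f`). -/
noncomputable def convNPow (f : ℝ → ℝ) : ℕ → ℝ → ℝ
  | 0 => f
  | j + 1 => lconv f (convNPow f j)

/-- The power series `Σ a_j z^j` has a positive radius of convergence. -/
def PosRadius (a : ℕ → ℝ) : Prop :=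
  ∃ r : ℝ, 0 < r ∧ Summable fun j => |a j| * r ^ j

/-- Membership in the space `C_{−1}(0,∞)`:
`f(t) = t^r f₁(t)` with `r > −1` and `f₁` continuous on `[0,∞)`. -/
def InCm1 (f : ℝ → ℝ) : Prop :=
  ∃ (r : ℝ) (f₁ : ℝ → ℝ), -1 < r ∧ ContinuousOn f₁ (Set.Ici (0:ℝ)) ∧
    ∀ t, 0 < t → f t = t ^ r * f₁ t

/-- `(κ, k)` is a Sonine pair from the class `L₁`. -/
def SoninePairL1 (κ k : ℝ → ℝ) : Prop :=
  (∃ (p : ℝ) (κ₁ : ℝ → ℝ), 0 < p ∧ p < 1 ∧ ContinuousOn κ₁ (Set.Ici (0:ℝ)) ∧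
      ∀ t, 0 < t → κ t = t ^ (p - 1) * κ₁ t) ∧
  (∃ (q : ℝ) (k₁ : ℝ → ℝ), 0 < q ∧ q < 1 ∧ ContinuousOn k₁ (Set.Ici (0:ℝ)) ∧
      ∀ t, 0 < t → k t = t ^ (q - 1) * k₁ t) ∧
  (∀ t, 0 < t → lconv κ k t = 1)

/-- The general fractional derivative of Riemann–Liouville type:
`(𝔻_{(k)} f)(t) = d/dt (k ∗ f)(t)`. -/
noncomputable def gfdRL (k : ℝ → ℝ) (f : ℝ → ℝ) : ℝ → ℝ :=
  deriv (lconv k f)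

/-- The general fractional derivative of Caputo type:
`(∗𝔻_{(k)} g)(t) = d/dt (k ∗ g)(t) − g(0+) k(t)` where `g(0+)` is the limit of `g` at `0` from
the right. -/
noncomputable def gfdC (k : ℝ → ℝ) (g : ℝ → ℝ) : ℝ → ℝ :=
  fun t => deriv (lconv k g) t - (Filter.limUnder (nhdsWithin 0 (Set.Ioi 0)) g) * k t

/-- The two-parameter Mittag-Leffler function `E_{α,β}(z) = Σ_{m=0}^∞ z^m / Γ(αm + β)`
(for real argument). -/
noncomputable def mlE (α β z : ℝ) : ℝ := ∑' m : ℕ, z ^ m / Real.Gamma (α * m + β)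

/-- The Riemann–Liouville fractional integral of order `γ`:
`(I^γ_{0+} f)(t) = (1/Γ(γ)) ∫_0^t (t−τ)^{γ−1} f(τ) dτ`. -/
noncomputable def rlInt (γ : ℝ) (f : ℝ → ℝ) : ℝ → ℝ :=
  fun t => (1 / Real.Gamma γ) * ∫ τ in (0:ℝ)..t, (t - τ) ^ (γ - 1) * f τ

section Aux
open Real Filter MeasureTheory intervalIntegral Set


lemma gamma_lb {a : ℝ} (ha : 0 < a) (ha1 : a < 1) {z : ℝ} (hz : 2 ≤ z) :
    z ^ a / 2 * Real.Gamma z ≤ Real.Gamma (z + a) := by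
  have hz0 : (0:ℝ) < z := by linarith
  have hza : (0:ℝ) < z + a := by linarith
  have hza1 : (0:ℝ) < z + 1 + a := by linarith
  have hkey := Real.convexOn_log_Gamma.2 (Set.mem_Ioi.2 hza) (Set.mem_Ioi.2 hza1)
    ha.le (by linarith : (0:ℝ) ≤ 1 - a) (by ring)
  have hpt : a • (z + a) + (1 - a) • (z + 1 + a) = z + 1 := by
    simp only [smul_eq_mul]; ring
  rw [hpt] at hkey
  simp only [Function.comp_apply, smul_eq_mul] at hkey
  -- Γ(z+1+a) = (z+a) Γ(z+a)
  have hrec : Real.Gamma (z + 1 + a) = (z + a) * Real.Gamma (z + a) := by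
    have : z + 1 + a = (z + a) + 1 := by ring
    rw [this, Real.Gamma_add_one hza.ne']
  have hrec1 : Real.Gamma (z + 1) = z * Real.Gamma z := Real.Gamma_add_one hz0.ne'
  have hGz : 0 < Real.Gamma z := Real.Gamma_pos_of_pos hz0
  have hGza : 0 < Real.Gamma (z + a) := Real.Gamma_pos_of_pos hza
  rw [hrec1, hrec] at hkey
  rw [Real.log_mul hza.ne' hGza.ne'] at hkey
  -- hkey : log (z * Γ z) ≤ a * log Γ(z+a) + (1-a) * (log (z+a) + log Γ(z+a))
  have hkey2 : Real.log (z * Real.Gamma z) ≤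
      Real.log (Real.Gamma (z + a)) + (1 - a) * Real.log (z + a) := by nlinarith [hkey]
  have hmain : z * Real.Gamma z ≤ Real.Gamma (z + a) * (z + a) ^ (1 - a) := by
    have h1 : z * Real.Gamma z = Real.exp (Real.log (z * Real.Gamma z)) :=
      (Real.exp_log (by positivity)).symm
    have h2 : Real.Gamma (z + a) * (z + a) ^ (1 - a) =
        Real.exp (Real.log (Real.Gamma (z + a)) + (1 - a) * Real.log (z + a)) := by
      rw [Real.exp_add, Real.exp_log hGza, mul_comm (1-a) (Real.log (z+a)),
        ← Real.rpow_def_of_pos hza]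
    rw [h1, h2]
    exact Real.exp_le_exp.2 hkey2
  -- (z+a)^(1-a) ≤ 2 z^(1-a)
  have hb : (z + a) ^ (1 - a) ≤ 2 * z ^ (1 - a) := by
    calc (z + a) ^ (1 - a) ≤ (2 * z) ^ (1 - a) :=
          Real.rpow_le_rpow hza.le (by linarith) (by linarith)
      _ = 2 ^ (1 - a) * z ^ (1 - a) := Real.mul_rpow (by norm_num) hz0.le
      _ ≤ 2 * z ^ (1 - a) := by
          have : (2:ℝ) ^ (1 - a) ≤ 2 ^ (1:ℝ) :=
            Real.rpow_le_rpow_of_exponent_le one_le_two (by linarith)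
          rw [Real.rpow_one] at this
          have hzp : (0:ℝ) ≤ z ^ (1 - a) := Real.rpow_nonneg hz0.le _
          nlinarith
  have hz1a : (0:ℝ) < z ^ (1 - a) := Real.rpow_pos_of_pos hz0 _
  have hzsplit : z ^ a * z ^ (1 - a) = z := by
    rw [← Real.rpow_add hz0]; norm_num
  have := hmain.trans (by nlinarith : Real.Gamma (z + a) * (z + a) ^ (1 - a)
      ≤ Real.Gamma (z + a) * (2 * z ^ (1 - a)))
  -- z Γz ≤ Γ(z+a) * 2 z^(1-a)  ⇒  z^a/2 Γz ≤ Γ(z+a)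
  rw [div_mul_eq_mul_div, div_le_iff₀ (by norm_num : (0:ℝ) < 2)]
  nlinarith [this, hz1a, Real.rpow_nonneg hz0.le a]

lemma ml_summable {a : ℝ} (ha : 0 < a) (ha1 : a < 1) (b x : ℝ) :
    Summable (fun m : ℕ => x ^ m / Real.Gamma (a * m + b)) := by
  apply summable_of_ratio_norm_eventually_le (r := 1/2) (by norm_num)
  have h1 : Tendsto (fun m : ℕ => a * m + b) atTop atTop := by
    apply tendsto_atTop_add_const_right
    exact (tendsto_natCast_atTop_atTop (R := ℝ)).const_mul_atTop ha
  have h2 : Tendsto (fun m : ℕ => (a * m + b) ^ a) atTop atTop :=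
    (tendsto_rpow_atTop ha).comp h1
  filter_upwards [h1.eventually_ge_atTop 2, h2.eventually_ge_atTop (4 * (|x| + 1))]
    with m hm hm2
  set z := a * m + b with hzdef
  have hz0 : (0:ℝ) < z := by linarith
  have hGz : 0 < Real.Gamma z := Real.Gamma_pos_of_pos hz0
  have hGza : 0 < Real.Gamma (z + a) := Real.Gamma_pos_of_pos (by linarith)
  have hlb : 2 * (|x| + 1) * Real.Gamma z ≤ Real.Gamma (z + a) := by
    have := gamma_lb ha ha1 hm
    nlinarith [this, hGz]
  have hmz : a * ((m : ℕ) + 1 : ℕ) + b = z + a := by push_cast; ring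
  rw [hmz]
  have hxm : (0:ℝ) ≤ |x| ^ m := pow_nonneg (abs_nonneg x) m
  have hx1 : (0:ℝ) < |x| + 1 := by positivity
  calc ‖x ^ (m+1) / Real.Gamma (z + a)‖ = |x| ^ (m+1) / Real.Gamma (z + a) := by
        rw [norm_div, norm_pow, Real.norm_eq_abs, Real.norm_eq_abs, abs_of_pos hGza]
    _ ≤ |x| ^ (m+1) / (2 * (|x| + 1) * Real.Gamma z) := by
        exact div_le_div_of_nonneg_left (by positivity) (by positivity) hlb
    _ = |x| / (2 * (|x| + 1)) * (|x| ^ m / Real.Gamma z) := by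
        rw [pow_succ]; field_simp
    _ ≤ 1/2 * (|x| ^ m / Real.Gamma z) := by
        apply mul_le_mul_of_nonneg_right _ (by positivity)
        rw [div_le_iff₀ (by positivity)]
        nlinarith [abs_nonneg x]
    _ = 1/2 * ‖x ^ m / Real.Gamma z‖ := by
        rw [norm_div, norm_pow, Real.norm_eq_abs, Real.norm_eq_abs, abs_of_pos hGz]



lemma ae_ne_one : ∀ᵐ x : ℝ ∂volume, x ≠ 1 := by
  rw [ae_iff]
  simp [Set.setOf_eq_eq_singleton]

lemma ae_Ioo01 : ∀ᵐ x ∂(volume.restrict (Set.uIoc (0:ℝ) 1)), x ∈ Set.Ioo (0:ℝ) 1 := by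
  filter_upwards [ae_restrict_mem measurableSet_uIoc, ae_restrict_of_ae ae_ne_one] with x hx hne
  rw [Set.uIoc_of_le (by norm_num : (0:ℝ) ≤ 1)] at hx
  exact ⟨hx.1, lt_of_le_of_ne hx.2 hne⟩

lemma beta01_integrable {p q : ℝ} (hp : 0 < p) (hq : 0 < q) :
    IntervalIntegrable (fun x : ℝ => x ^ (q - 1) * (1 - x) ^ (p - 1)) volume 0 1 := by
  have hc := (Complex.betaIntegral_convergent (u := (q:ℂ)) (v := (p:ℂ))
    (by simpa using hq) (by simpa using hp)).norm
  refine hc.congr_ae ?_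
  filter_upwards [ae_Ioo01] with x hx
  have hx0 : (0:ℝ) < x := hx.1
  have hx1 : (0:ℝ) < 1 - x := by linarith [hx.2]
  rw [norm_mul]
  have e1 : (1 : ℂ) - (x:ℂ) = ((1 - x : ℝ) : ℂ) := by push_cast; ring
  rw [e1, Complex.norm_cpow_eq_rpow_re_of_pos hx0, Complex.norm_cpow_eq_rpow_re_of_pos hx1]
  norm_num

lemma beta01_eq {p q : ℝ} (hp : 0 < p) (hq : 0 < q) :
    ∫ x in (0:ℝ)..1, x ^ (q - 1) * (1 - x) ^ (p - 1)
      = Real.Gamma q * Real.Gamma p / Real.Gamma (q + p) := by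
  have hbeta := Complex.Gamma_mul_Gamma_eq_betaIntegral (s := (q:ℂ)) (t := (p:ℂ))
    (by simpa using hq) (by simpa using hp)
  have hB : Complex.betaIntegral (q:ℂ) (p:ℂ)
      = ((∫ x in (0:ℝ)..1, x ^ (q - 1) * (1 - x) ^ (p - 1) : ℝ) : ℂ) := by
    rw [Complex.betaIntegral, ← intervalIntegral.integral_ofReal]
    apply intervalIntegral.integral_congr_ae
    filter_upwards [ae_ne_one] with x hne hmem
    rw [Set.uIoc_of_le (by norm_num : (0:ℝ) ≤ 1)] at hmem
    have hx : x ∈ Set.Ioo (0:ℝ) 1 := ⟨hmem.1, lt_of_le_of_ne hmem.2 hne⟩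
    have hx0 : (0:ℝ) ≤ x := hx.1.le
    have hx1 : (0:ℝ) ≤ 1 - x := by linarith [hx.2.le]
    have e1 : ((q:ℂ) - 1) = (((q - 1 : ℝ)) : ℂ) := by push_cast; ring
    have e2 : ((p:ℂ) - 1) = (((p - 1 : ℝ)) : ℂ) := by push_cast; ring
    have e3 : (1 : ℂ) - (x:ℂ) = ((1 - x : ℝ) : ℂ) := by push_cast; ring
    rw [e1, e2, e3, ← Complex.ofReal_cpow hx0, ← Complex.ofReal_cpow hx1]
    push_cast
    ring
  rw [hB, show ((q:ℂ) + (p:ℂ)) = (((q+p:ℝ)) : ℂ) by push_cast; ring, Complex.Gamma_ofReal, Complex.Gamma_ofReal, Complex.Gamma_ofReal,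
    ← Complex.ofReal_mul, ← Complex.ofReal_mul] at hbeta
  have : Real.Gamma q * Real.Gamma p
      = Real.Gamma (q + p) * ∫ x in (0:ℝ)..1, x ^ (q - 1) * (1 - x) ^ (p - 1) := by
    exact_mod_cast hbeta
  have hG : Real.Gamma (q + p) ≠ 0 := (Real.Gamma_pos_of_pos (by linarith)).ne'
  field_simp [hG] at this ⊢
  linarith [this]

lemma beta_scaled_integrable {p q t : ℝ} (hp : 0 < p) (hq : 0 < q) (ht : 0 < t) :
    IntervalIntegrable (fun τ : ℝ => (t - τ) ^ (p - 1) * τ ^ (q - 1)) volume 0 t := by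
  have h01 := beta01_integrable hp hq
  have hcomp := h01.comp_mul_right (c := 1/t)
  rw [show (0:ℝ) / (1/t) = 0 by simp, show (1:ℝ) / (1/t) = t by field_simp] at hcomp
  have hcm := hcomp.const_mul (t ^ (p - 1) * t ^ (q - 1))
  refine hcm.congr_ae ?_
  have haet : ∀ᵐ x : ℝ ∂volume, x ≠ t := by
    rw [ae_iff]; simp [Set.setOf_eq_eq_singleton]
  filter_upwards [ae_restrict_mem measurableSet_uIoc, ae_restrict_of_ae haet] with τ hτ hne
  rw [Set.uIoc_of_le ht.le] at hτ
  have h0τ : 0 < τ := hτ.1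
  have hτt : τ < t := lt_of_le_of_ne hτ.2 hne
  have h1 : (0:ℝ) ≤ τ / t := by positivity
  have h2 : (0:ℝ) ≤ 1 - τ / t := by
    rw [sub_nonneg, div_le_one ht]; exact hτt.le
  show t ^ (p-1) * t ^ (q-1) * ((τ * (1/t)) ^ (q - 1) * (1 - τ * (1/t)) ^ (p - 1))
      = (t - τ) ^ (p - 1) * τ ^ (q - 1)
  rw [show τ * (1/t) = τ / t by ring]
  rw [Real.div_rpow h0τ.le ht.le, show (1 - τ/t) = (t - τ)/t by field_simp,
    Real.div_rpow (by linarith) ht.le]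
  have htp : (0:ℝ) < t ^ (p-1) := Real.rpow_pos_of_pos ht _
  have htq : (0:ℝ) < t ^ (q-1) := Real.rpow_pos_of_pos ht _
  field_simp

lemma beta_scaled_eq {p q t : ℝ} (hp : 0 < p) (hq : 0 < q) (ht : 0 < t) :
    ∫ τ in (0:ℝ)..t, (t - τ) ^ (p - 1) * τ ^ (q - 1)
      = Real.Gamma p * Real.Gamma q / Real.Gamma (p + q) * t ^ (p + q - 1) := by
  have hc := intervalIntegral.integral_comp_mul_right
    (a := 0) (b := 1) (fun τ : ℝ => (t - τ) ^ (p - 1) * τ ^ (q - 1)) (c := t) ht.ne'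
  simp only [zero_mul, one_mul, smul_eq_mul] at hc
  -- hc : ∫ x in 0..1, F (x*t) = t⁻¹ * ∫ τ in 0..t, F τ
  have hpt : ∫ x in (0:ℝ)..1, (t - x * t) ^ (p - 1) * (x * t) ^ (q - 1)
      = t ^ (p-1) * t ^ (q-1) * ∫ x in (0:ℝ)..1, x ^ (q - 1) * (1 - x) ^ (p - 1) := by
    rw [← intervalIntegral.integral_const_mul]
    apply intervalIntegral.integral_congr
    intro x hx
    rw [Set.uIcc_of_le (by norm_num : (0:ℝ) ≤ 1)] at hx
    have hx0 : (0:ℝ) ≤ x := hx.1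
    have hx1 : (0:ℝ) ≤ 1 - x := by linarith [hx.2]
    show (t - x * t) ^ (p - 1) * (x * t) ^ (q - 1)
        = t ^ (p-1) * t ^ (q-1) * (x ^ (q - 1) * (1 - x) ^ (p - 1))
    rw [show t - x * t = (1 - x) * t by ring, Real.mul_rpow hx1 ht.le,
      Real.mul_rpow hx0 ht.le]
    ring
  rw [hpt, beta01_eq hp hq] at hc
  have : (∫ τ in (0:ℝ)..t, (t - τ) ^ (p - 1) * τ ^ (q - 1))
      = t * (t ^ (p-1) * t ^ (q-1) * (Real.Gamma q * Real.Gamma p / Real.Gamma (q + p))) := by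
    rw [hc]; field_simp
  rw [this]
  have ht1 : t * (t ^ (p-1) * t ^ (q-1)) = t ^ (p + q - 1) := by
    rw [← Real.rpow_add ht]
    nth_rewrite 1 [show t = t ^ (1:ℝ) from (Real.rpow_one t).symm]
    rw [← Real.rpow_add ht]
    congr 1
    ring
  calc t * (t ^ (p-1) * t ^ (q-1) * (Real.Gamma q * Real.Gamma p / Real.Gamma (q + p)))
      = t * (t ^ (p-1) * t ^ (q-1)) * (Real.Gamma q * Real.Gamma p / Real.Gamma (q + p)) := by
        ring
    _ = Real.Gamma p * Real.Gamma q / Real.Gamma (p + q) * t ^ (p + q - 1) := by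
        rw [ht1, add_comm q p]; ring

section Main
variable {α lam b₀ : ℝ}




lemma key_repr (h0 : 0 < α) (h1 : α < 1) {t : ℝ} (ht : 0 < t) :
    rlInt (1 - α) (fun s => b₀ * s ^ (α - 1) * mlE α α (lam * s ^ α)) t
      = ∑' m : ℕ, b₀ * (lam ^ m * t ^ (α * m) / Real.Gamma (α * m + 1)) := by
  have hΓα : (0:ℝ) < Real.Gamma (1 - α) := Real.Gamma_pos_of_pos (by linarith)
  set F : ℕ → ℝ → ℝ := fun m τ =>
    (b₀ * lam ^ m / Real.Gamma (α * m + α)) * ((t - τ) ^ ((1-α) - 1) * τ ^ ((α * m + α) - 1))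
    with hF
  have hq : ∀ m : ℕ, (0:ℝ) < α * m + α := by
    intro m
    have : (0:ℝ) ≤ α * m := by positivity
    linarith
  have hGq : ∀ m : ℕ, (0:ℝ) < Real.Gamma (α * m + α) := fun m => Real.Gamma_pos_of_pos (hq m)
  -- integrability
  have hint : ∀ m : ℕ, IntegrableOn (F m) (Set.Ioc 0 t) volume := by
    intro m
    have := ((beta_scaled_integrable (by linarith : (0:ℝ) < 1 - α) (hq m) ht).const_mul
      (b₀ * lam ^ m / Real.Gamma (α * m + α)))
    rw [intervalIntegrable_iff, Set.uIoc_of_le ht.le] at this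
    exact this
  have hGq1 : ∀ m : ℕ, (0:ℝ) < Real.Gamma (α * m + 1) := by
    intro m
    apply Real.Gamma_pos_of_pos
    have : (0:ℝ) ≤ α * m := by positivity
    linarith
  have hval : ∀ m : ℕ, ∫ τ in Set.Ioc (0:ℝ) t, F m τ
      = Real.Gamma (1 - α) * (b₀ * (lam ^ m * t ^ (α * m) / Real.Gamma (α * m + 1))) := by
    intro m
    have h1' : ∫ τ in Set.Ioc (0:ℝ) t, F m τ = ∫ τ in (0:ℝ)..t, F m τ := by
      rw [intervalIntegral.integral_of_le ht.le]
    rw [h1', hF]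
    simp only
    rw [intervalIntegral.integral_const_mul,
      beta_scaled_eq (by linarith : (0:ℝ) < 1 - α) (hq m) ht,
      show (1:ℝ) - α + (α * m + α) = α * m + 1 by ring,
      show α * (m:ℝ) + 1 - 1 = α * m by ring]
    field_simp
  -- nonnegativity of integrand pieces on Ioc
  have hnorm : ∀ m : ℕ, ∫ τ in Set.Ioc (0:ℝ) t, ‖F m τ‖
      = |b₀ * lam ^ m / Real.Gamma (α * m + α)| *
        ∫ τ in Set.Ioc (0:ℝ) t, ((t - τ) ^ ((1-α) - 1) * τ ^ ((α * m + α) - 1)) := by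
    intro m
    rw [← MeasureTheory.integral_const_mul]
    apply setIntegral_congr_fun measurableSet_Ioc
    intro τ hτ
    have h1' : (0:ℝ) ≤ (t - τ) ^ ((1-α)-1) := Real.rpow_nonneg (by linarith [hτ.2]) _
    have h2' : (0:ℝ) ≤ τ ^ ((α * m + α) - 1) := Real.rpow_nonneg hτ.1.le _
    rw [hF]
    simp only
    rw [norm_mul, Real.norm_eq_abs, Real.norm_eq_abs, abs_of_nonneg (mul_nonneg h1' h2')]
  have hnormval : ∀ m : ℕ, ∫ τ in Set.Ioc (0:ℝ) t, ‖F m τ‖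
      = |b₀| * Real.Gamma (1 - α) * ((|lam| * t ^ α) ^ m / Real.Gamma (α * m + 1)) := by
    intro m
    rw [hnorm m]
    have h1' : ∫ τ in Set.Ioc (0:ℝ) t, ((t - τ) ^ ((1-α) - 1) * τ ^ ((α * m + α) - 1))
        = ∫ τ in (0:ℝ)..t, ((t - τ) ^ ((1-α) - 1) * τ ^ ((α * m + α) - 1)) := by
      rw [intervalIntegral.integral_of_le ht.le]
    rw [h1', beta_scaled_eq (by linarith : (0:ℝ) < 1 - α) (hq m) ht,
      show (1:ℝ) - α + (α * m + α) = α * m + 1 by ring,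
      show α * (m:ℝ) + 1 - 1 = α * m by ring]
    rw [abs_div, abs_mul, abs_pow, abs_of_pos (hGq m)]
    rw [mul_pow, ← Real.rpow_natCast (t ^ α) m, ← Real.rpow_mul ht.le]
    have hg : |Real.Gamma (1 - α)| = Real.Gamma (1 - α) := abs_of_pos hΓα
    field_simp
  -- summability of the norm-integrals
  have hsum : Summable (fun m : ℕ => ∫ τ in Set.Ioc (0:ℝ) t, ‖F m τ‖) := by
    apply Summable.congr (((ml_summable h0 h1 1 (|lam| * t ^ α)).mul_left
      (|b₀| * Real.Gamma (1 - α))))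
    intro m
    rw [hnormval m]
  -- interchange
  have hI : ∫ τ in Set.Ioc (0:ℝ) t, (t - τ) ^ ((1 - α) - 1)
        * (b₀ * τ ^ (α - 1) * mlE α α (lam * τ ^ α))
      = ∑' m : ℕ, ∫ τ in Set.Ioc (0:ℝ) t, F m τ := by
    rw [MeasureTheory.integral_tsum_of_summable_integral_norm hint hsum]
    apply setIntegral_congr_ae measurableSet_Ioc
    have haet : ∀ᵐ x : ℝ ∂volume, x ≠ t := by
      rw [ae_iff]; simp [Set.setOf_eq_eq_singleton]
    filter_upwards [haet] with τ hne hτ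
    have h0τ : (0:ℝ) < τ := hτ.1
    have hτt : τ < t := lt_of_le_of_ne hτ.2 hne
    rw [hF]
    simp only
    have hterm : ∀ m : ℕ, b₀ * lam ^ m / Real.Gamma (α * m + α)
          * ((t - τ) ^ ((1-α) - 1) * τ ^ ((α * m + α) - 1))
        = ((t - τ) ^ ((1-α) - 1) * (b₀ * τ ^ (α - 1)))
          * ((lam * τ ^ α) ^ m / Real.Gamma (α * m + α)) := by
      intro m
      rw [mul_pow, ← Real.rpow_natCast (τ ^ α) m, ← Real.rpow_mul h0τ.le,
        show (α * m + α) - 1 = (α - 1) + α * m by ring, Real.rpow_add h0τ]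
      ring
    rw [tsum_congr hterm, tsum_mul_left]
    rw [mlE]
    ring
  -- conclude
  rw [rlInt]
  rw [intervalIntegral.integral_of_le ht.le, hI, tsum_congr hval, tsum_mul_left]
  field_simp





lemma summable_g (h0 : 0 < α) (h1 : α < 1) {x : ℝ} (hx : 0 ≤ x) :
    Summable (fun m : ℕ => b₀ * (lam ^ m * x ^ (α * m) / Real.Gamma (α * m + 1))) := by
  apply Summable.congr ((ml_summable h0 h1 1 (lam * x ^ α)).mul_left b₀)
  intro m
  rw [mul_pow, ← Real.rpow_natCast (x ^ α) m, ← Real.rpow_mul hx]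

lemma hasDeriv_G (h0 : 0 < α) (h1 : α < 1) {t : ℝ} (ht : 0 < t) :
    HasDerivAt (fun x : ℝ => ∑' m : ℕ, b₀ * (lam ^ m * x ^ (α * m) / Real.Gamma (α * m + 1)))
      (lam * (b₀ * t ^ (α - 1) * mlE α α (lam * t ^ α))) t := by
  have hq : ∀ m : ℕ, (0:ℝ) < α * m + α := by
    intro m; have : (0:ℝ) ≤ α * m := by positivity
    linarith
  have hq1 : ∀ m : ℕ, (0:ℝ) < α * m + 1 := by
    intro m; have : (0:ℝ) ≤ α * m := by positivity
    linarith
  set g : ℕ → ℝ → ℝ := fun m x => b₀ * (lam ^ m * x ^ (α * m) / Real.Gamma (α * m + 1))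
    with hg_def
  set g' : ℕ → ℝ → ℝ :=
    fun m x => b₀ * (lam ^ m * ((α * m) * x ^ (α * m - 1)) / Real.Gamma (α * m + 1))
    with hg'_def
  set u : ℕ → ℝ := fun m => (2 * |b₀| / t) * ((|lam| * (t+1) ^ α) ^ m / Real.Gamma (α * m))
    with hu_def
  have hu : Summable u := by
    apply Summable.congr ((ml_summable h0 h1 0 (|lam| * (t+1) ^ α)).mul_left (2 * |b₀| / t))
    intro m
    rw [hu_def, add_zero]
  have hs_open : IsOpen (Set.Ioo (t/2) (t+1)) := isOpen_Ioo
  have hs_conn : IsPreconnected (Set.Ioo (t/2) (t+1)) := isPreconnected_Ioo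
  have ht_mem : t ∈ Set.Ioo (t/2) (t+1) := ⟨by linarith, by linarith⟩
  have hg : ∀ (m : ℕ) (x : ℝ), x ∈ Set.Ioo (t/2) (t+1) → HasDerivAt (g m) (g' m x) x := by
    intro m x hx
    have hx0 : 0 < x := lt_trans (by linarith) hx.1
    have hd := (Real.hasDerivAt_rpow_const (x := x) (p := α * m) (Or.inl hx0.ne')).const_mul
      (b₀ * lam ^ m / Real.Gamma (α * m + 1))
    have hfun : (fun x : ℝ => b₀ * lam ^ m / Real.Gamma (α * m + 1) * x ^ (α * m)) = g m := by
      funext z; rw [hg_def]; ring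
    rw [hfun] at hd
    refine HasDerivAt.congr_deriv hd ?_
    rw [hg'_def]; ring
  have hg' : ∀ (m : ℕ) (x : ℝ), x ∈ Set.Ioo (t/2) (t+1) → ‖g' m x‖ ≤ u m := by
    intro m x hx
    have hx0 : 0 < x := lt_trans (by linarith) hx.1
    match m with
    | 0 =>
      have : g' 0 x = 0 := by
        rw [hg'_def]; simp
      rw [this, hu_def]
      simp [Real.Gamma_zero]
    | (m+1 : ℕ) =>
      have hm : (0:ℝ) < α * (m+1 : ℕ) := by positivity
      have hGpos : (0:ℝ) < Real.Gamma (α * (m+1:ℕ)) := Real.Gamma_pos_of_pos hm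
      have hrec : Real.Gamma (α * (m+1:ℕ) + 1) = (α * (m+1:ℕ)) * Real.Gamma (α * (m+1:ℕ)) :=
        Real.Gamma_add_one hm.ne'
      have hxE : (0:ℝ) < x ^ (α * (m+1:ℕ) - 1) := Real.rpow_pos_of_pos hx0 _
      have hnorm : ‖g' (m+1) x‖ = |b₀| * |lam| ^ (m+1)
          * ((α * (m+1:ℕ)) * x ^ (α * (m+1:ℕ) - 1)) / Real.Gamma (α * (m+1:ℕ) + 1) := by
        rw [hg'_def]
        simp only [Real.norm_eq_abs]
        rw [abs_mul, abs_div, abs_mul, abs_pow, abs_mul, abs_of_pos hm, abs_of_pos hxE,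
          abs_of_pos (hq1 (m+1) |> Real.Gamma_pos_of_pos)]
        ring
      -- bound on x ^ (α(m+1) - 1)
      have hxb : x ^ (α * (m+1:ℕ) - 1) ≤ (t+1) ^ (α * (m+1:ℕ)) * (2/t) := by
        rw [Real.rpow_sub hx0, Real.rpow_one, div_eq_mul_inv]
        have h1' : x ^ (α * (m+1:ℕ)) ≤ (t+1) ^ (α * (m+1:ℕ)) :=
          Real.rpow_le_rpow hx0.le hx.2.le (by positivity)
        have h2' : x⁻¹ ≤ 2/t := by
          have : (2/t)⁻¹ ≤ x := by
            rw [show (2/t)⁻¹ = t/2 by field_simp]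
            exact hx.1.le
          exact inv_le_of_inv_le₀ (by positivity) this
        exact mul_le_mul h1' h2' (by positivity) (by positivity)
      rw [hnorm, hrec]
      have hA : (α * (m+1:ℕ)) ≠ 0 := hm.ne'
      have heq : |b₀| * |lam| ^ (m+1) * ((α * (m+1:ℕ)) * x ^ (α * (m+1:ℕ) - 1))
            / ((α * (m+1:ℕ)) * Real.Gamma (α * (m+1:ℕ)))
          = (|b₀| * |lam| ^ (m+1) / Real.Gamma (α * (m+1:ℕ))) * x ^ (α * (m+1:ℕ) - 1) := by
        field_simp
      rw [heq]
      have hfin : (|b₀| * |lam| ^ (m+1) / Real.Gamma (α * (m+1:ℕ)))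
            * ((t+1) ^ (α * (m+1:ℕ)) * (2/t)) = u (m+1) := by
        rw [hu_def]
        simp only
        rw [mul_pow, ← Real.rpow_natCast ((t+1) ^ α) (m+1), ← Real.rpow_mul (by linarith)]
        field_simp
      rw [← hfin]
      exact mul_le_mul_of_nonneg_left hxb (by positivity)
  -- summability at t
  have hg0 : Summable fun m => g m t := by
    rw [hg_def]
    apply Summable.congr ((ml_summable h0 h1 1 (lam * t ^ α)).mul_left b₀)
    intro m
    rw [mul_pow, ← Real.rpow_natCast (t ^ α) m, ← Real.rpow_mul ht.le]
  have key := hasDerivAt_tsum_of_isPreconnected hu hs_open hs_conn hg hg' ht_mem hg0 ht_mem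
  -- identify the sum of derivatives
  have hsum' : Summable fun m => g' m t :=
    Summable.of_norm_bounded hu (fun m => hg' m t ht_mem)
  have hzero : g' 0 t = 0 := by
    rw [hg'_def]; simp
  have hshift : ∀ m : ℕ, g' (m+1) t
      = (lam * (b₀ * t ^ (α - 1))) * ((lam * t ^ α) ^ m / Real.Gamma (α * m + α)) := by
    intro m
    rw [hg'_def]
    simp only
    have hc : α * ((m:ℝ) + 1) = α * m + α := by ring
    have hcast : ((m+1 : ℕ) : ℝ) = (m : ℝ) + 1 := by push_cast; ring
    rw [hcast, hc]
    rw [show Real.Gamma (α * m + α + 1) = (α * m + α) * Real.Gamma (α * m + α) from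
      Real.Gamma_add_one (hq m).ne']
    rw [show α * (m:ℝ) + α - 1 = (α - 1) + α * m by ring, Real.rpow_add ht]
    rw [mul_pow, ← Real.rpow_natCast (t ^ α) m, ← Real.rpow_mul ht.le]
    rw [pow_succ lam m]
    have hGne : Real.Gamma (α * m + α) ≠ 0 := (Real.Gamma_pos_of_pos (hq m)).ne'
    field_simp
  have hsumval : ∑' m, g' m t = lam * (b₀ * t ^ (α - 1) * mlE α α (lam * t ^ α)) := by
    rw [Summable.tsum_eq_zero_add hsum', hzero, zero_add, tsum_congr hshift, tsum_mul_left, mlE]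
    ring
  rw [hsumval] at key
  exact key

lemma tendsto_G (h0 : 0 < α) (h1 : α < 1) :
    Tendsto (fun x : ℝ => ∑' m : ℕ, b₀ * (lam ^ m * x ^ (α * m) / Real.Gamma (α * m + 1)))
      (nhdsWithin 0 (Set.Ioi 0)) (nhds b₀) := by
  have hq1 : ∀ m : ℕ, (0:ℝ) < α * m + 1 := by
    intro m; have : (0:ℝ) ≤ α * m := by positivity
    linarith
  set g : ℕ → ℝ → ℝ := fun m x => b₀ * (lam ^ m * x ^ (α * m) / Real.Gamma (α * m + 1))
    with hg_def
  have hCs : Summable (fun m : ℕ => |lam| ^ (m+1) / Real.Gamma (α * (m+1:ℕ) + 1)) :=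
    (summable_nat_add_iff 1).2 (ml_summable h0 h1 1 |lam|)
  set C := ∑' m : ℕ, |lam| ^ (m+1) / Real.Gamma (α * (m+1:ℕ) + 1) with hC_def
  have hC0 : 0 ≤ C := tsum_nonneg fun m => by positivity
  -- main bound on Ioo 0 1
  have hbound : ∀ x : ℝ, x ∈ Set.Ioo (0:ℝ) 1 →
      ‖(∑' m : ℕ, g m x) - b₀‖ ≤ |b₀| * C * x ^ α := by
    intro x hx
    have hx0 : (0:ℝ) < x := hx.1
    have hsg : Summable (fun m => g m x) := summable_g h0 h1 hx0.le
    have hfirst : g 0 x = b₀ := by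
      rw [hg_def]; simp
    rw [Summable.tsum_eq_zero_add hsg, hfirst, add_sub_cancel_left]
    have hterm : ∀ m : ℕ, ‖g (m+1) x‖ ≤ (|b₀| * x ^ α) * (|lam| ^ (m+1) / Real.Gamma (α * (m+1:ℕ) + 1)) := by
      intro m
      have hG : (0:ℝ) < Real.Gamma (α * (m+1:ℕ) + 1) := Real.Gamma_pos_of_pos (hq1 (m+1))
      have : ‖g (m+1) x‖ = |b₀| * (|lam| ^ (m+1) * x ^ (α * (m+1:ℕ)) / Real.Gamma (α * (m+1:ℕ) + 1)) := by
        rw [hg_def]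
        simp only [Real.norm_eq_abs]
        rw [abs_mul, abs_div, abs_mul, abs_pow, abs_of_pos (Real.rpow_pos_of_pos hx0 _),
          abs_of_pos hG]
      rw [this]
      have hxe : x ^ (α * (m+1:ℕ)) ≤ x ^ α * 1 := by
        rw [show α * ((m+1:ℕ):ℝ) = α + α * m by push_cast; ring, Real.rpow_add hx0, mul_one]
        have h9 : x ^ (α * (m:ℝ)) ≤ 1 := Real.rpow_le_one hx0.le hx.2.le (by positivity)
        nlinarith [(Real.rpow_pos_of_pos hx0 α).le, Real.rpow_nonneg hx0.le (α * (m:ℝ))]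
      rw [mul_one] at hxe
      calc |b₀| * (|lam| ^ (m+1) * x ^ (α * (m+1:ℕ)) / Real.Gamma (α * (m+1:ℕ) + 1))
          ≤ |b₀| * (|lam| ^ (m+1) * x ^ α / Real.Gamma (α * (m+1:ℕ) + 1)) := by
            gcongr
        _ = (|b₀| * x ^ α) * (|lam| ^ (m+1) / Real.Gamma (α * (m+1:ℕ) + 1)) := by ring
    have hsn : Summable (fun m => ‖g (m+1) x‖) := by
      apply Summable.of_nonneg_of_le (fun m => norm_nonneg _) hterm
      exact hCs.mul_left _
    calc ‖∑' m : ℕ, g (m+1) x‖ ≤ ∑' m : ℕ, ‖g (m+1) x‖ := norm_tsum_le_tsum_norm hsn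
      _ ≤ ∑' m : ℕ, (|b₀| * x ^ α) * (|lam| ^ (m+1) / Real.Gamma (α * (m+1:ℕ) + 1)) :=
          Summable.tsum_le_tsum hterm hsn (hCs.mul_left _)
      _ = (|b₀| * x ^ α) * C := by rw [tsum_mul_left]
      _ = |b₀| * C * x ^ α := by ring
  -- conclude by squeezing
  have hxa : Tendsto (fun x : ℝ => |b₀| * C * x ^ α) (nhdsWithin 0 (Set.Ioi 0)) (nhds 0) := by
    have h2' : Tendsto (fun x : ℝ => x ^ α) (nhds 0) (nhds 0) := by
      have := (Real.continuousAt_rpow_const 0 α (Or.inr h0.le)).tendsto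
      rwa [Real.zero_rpow h0.ne'] at this
    have := ((h2'.mono_left (nhdsWithin_le_nhds : nhdsWithin (0:ℝ) (Set.Ioi 0) ≤ nhds 0))).const_mul (|b₀| * C)
    simpa using this
  have hsub : Tendsto (fun x : ℝ => (∑' m : ℕ, g m x) - b₀) (nhdsWithin 0 (Set.Ioi 0)) (nhds 0) := by
    apply squeeze_zero_norm' _ hxa
    filter_upwards [Ioo_mem_nhdsGT_of_mem (Set.mem_Ico.2 ⟨le_refl (0:ℝ), zero_lt_one⟩)] with x hx
    exact hbound x hx
  have := hsub.add_const b₀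
  simpa using this

end Main
end Aux

/-- `y(t) = b₀ t^{α−1} E_{α,α}(λ t^α)` solves the initial-value problem for the
fractional relaxation equation with the Riemann–Liouville fractional derivative
`D^α_{0+} y = d/dt (I^{1−α}_{0+} y)`. -/
theorem riemann_liouville_relaxation_solution (α lam b₀ : ℝ) (h0 : 0 < α) (h1 : α < 1) :
    let y : ℝ → ℝ := fun t => b₀ * t ^ (α - 1) * mlE α α (lam * t ^ α)
    (∀ t, 0 < t → HasDerivAt (rlInt (1 - α) y) (lam * y t) t) ∧
    Filter.Tendsto (rlInt (1 - α) y) (nhdsWithin 0 (Set.Ioi 0)) (nhds b₀) := by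
  intro y
  constructor
  · intro t ht
    have hG := hasDeriv_G (α := α) (lam := lam) (b₀ := b₀) h0 h1 ht
    have heq : rlInt (1 - α) y =ᶠ[nhds t]
        (fun x : ℝ => ∑' m : ℕ, b₀ * (lam ^ m * x ^ (α * m) / Real.Gamma (α * m + 1))) := by
      filter_upwards [isOpen_Ioi.mem_nhds ht] with x hx
      exact key_repr h0 h1 hx
    exact hG.congr_of_eventuallyEq heq
  · have hG := tendsto_G (α := α) (lam := lam) (b₀ := b₀) h0 h1
    apply hG.congr'
    filter_upwards [self_mem_nhdsWithin] with x hx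
    exact (key_repr h0 h1 hx).symm
end

section
/- Let 0 < α < 1, λ ∈ ℝ, C ∈ ℝ, and define y(t) = C · E_{α,1}(λ t^α) for t ≥ 0, where E_{α,β}(z) = Σ_{m=0}^∞ z^m / Γ(αm + β). Then y is differentiable on (0,∞), y(0) = C, and y solves the Caputo fractional relaxation equation: for every t > 0, (I^{1−α}_{0+} y′)(t) = λ y(t). -/
open Real Filter MeasureTheory

/-- Log-convexity lower bound for the Gamma function ratio. -/
private lemma caputo_gamma_lower {α : ℝ} (hα0 : 0 < α) (hα1 : α < 1) {s : ℝ} (hs : 0 < s) :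
    Real.Gamma s ≤ (s + α) ^ (1 - α) / s * Real.Gamma (s + α) := by
  have hsα : 0 < s + α := by linarith
  have hsα1 : 0 < s + 1 + α := by linarith
  have hG : 0 < Real.Gamma (s + α) := Real.Gamma_pos_of_pos hsα
  have hG1 : 0 < Real.Gamma (s + 1 + α) := Real.Gamma_pos_of_pos hsα1
  have hGs : 0 < Real.Gamma s := Real.Gamma_pos_of_pos hs
  have hconv := Real.convexOn_log_Gamma.2 (Set.mem_Ioi.2 hsα) (Set.mem_Ioi.2 hsα1)
      hα0.le (by linarith : (0:ℝ) ≤ 1 - α) (by ring)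
  have hpt : α • (s + α) + (1 - α) • (s + 1 + α) = s + 1 := by
    simp only [smul_eq_mul]; ring
  rw [hpt] at hconv
  -- hconv : log (Gamma (s+1)) ≤ α * log (Gamma (s+α)) + (1-α) * log (Gamma (s+1+α))
  simp only [Function.comp_apply, smul_eq_mul] at hconv
  have key : Real.Gamma (s + 1) ≤ Real.Gamma (s + α) ^ α * Real.Gamma (s + 1 + α) ^ (1 - α) := by
    have h1 : Real.Gamma (s+1) = Real.exp (Real.log (Real.Gamma (s+1))) :=
      (Real.exp_log (Real.Gamma_pos_of_pos (by linarith))).symm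
    rw [h1]
    have h2 : Real.Gamma (s+α) ^ α = Real.exp (α * Real.log (Real.Gamma (s+α))) := by
      rw [← Real.log_rpow hG, Real.exp_log (Real.rpow_pos_of_pos hG _)]
    have h3 : Real.Gamma (s+1+α) ^ (1-α) = Real.exp ((1-α) * Real.log (Real.Gamma (s+1+α))) := by
      rw [← Real.log_rpow hG1, Real.exp_log (Real.rpow_pos_of_pos hG1 _)]
    rw [h2, h3, ← Real.exp_add]
    exact Real.exp_le_exp.2 hconv
  have e1 : Real.Gamma (s + 1 + α) = (s + α) * Real.Gamma (s + α) := by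
    rw [show s + 1 + α = (s + α) + 1 by ring, Real.Gamma_add_one hsα.ne']
  have e2 : Real.Gamma (s + 1) = s * Real.Gamma s := Real.Gamma_add_one hs.ne'
  rw [e1, e2] at key
  have key2 : s * Real.Gamma s ≤ (s + α) ^ (1 - α) * Real.Gamma (s + α) := by
    calc s * Real.Gamma s ≤ Real.Gamma (s+α) ^ α * ((s + α) * Real.Gamma (s+α)) ^ (1-α) := key
    _ = (s + α) ^ (1 - α) * Real.Gamma (s + α) := by
        rw [Real.mul_rpow hsα.le hG.le, ← mul_assoc, mul_comm (Real.Gamma (s+α) ^ α),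
          mul_assoc, ← Real.rpow_add hG]
        norm_num
  rw [div_mul_eq_mul_div, le_div_iff₀ hs]
  linarith [key2]

/-- Master summability lemma for Mittag-Leffler type series. -/
private lemma caputo_ml_summable {α : ℝ} (hα0 : 0 < α) (hα1 : α < 1) {b : ℝ} (hb : 0 < b) (x : ℝ) :
    Summable (fun m : ℕ => ((m : ℝ) + 1) * |x| ^ m / Real.Gamma (α * m + b)) := by
  have hpos : ∀ m : ℕ, 0 < α * m + b := fun m => by positivity
  have hGpos : ∀ m : ℕ, 0 < Real.Gamma (α * m + b) := fun m => Real.Gamma_pos_of_pos (hpos m)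
  refine summable_of_ratio_norm_eventually_le (r := 1/2) (by norm_num) ?_
  set K : ℝ := (8 * (|x| + 1)) ^ (α⁻¹) with hK
  have hK8 : (1:ℝ) ≤ 8 * (|x| + 1) := by have := abs_nonneg x; nlinarith
  have htend : Tendsto (fun m : ℕ => α * m + b) atTop atTop := by
    apply Filter.tendsto_atTop_add_const_right
    exact Tendsto.const_mul_atTop hα0 tendsto_natCast_atTop_atTop
  filter_upwards [htend.eventually_ge_atTop K, htend.eventually_ge_atTop α] with m hm hmα
  obtain ⟨s, hsdef⟩ : ∃ s : ℝ, α * m + b = s := ⟨_, rfl⟩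
  rw [hsdef] at hm hmα
  have hs : 0 < s := hsdef ▸ hpos m
  have hGs : 0 < Real.Gamma s := hsdef ▸ hGpos m
  have hsα : 0 < s + α := by linarith
  have hGsα : 0 < Real.Gamma (s + α) := Real.Gamma_pos_of_pos hsα
  have hexp : α * ((m + 1 : ℕ) : ℝ) + b = s + α := by push_cast; rw [← hsdef]; ring
  have hP : (s + α) ^ (1 - α) = (s + α) * (s + α) ^ (-α) := by
    rw [show (1 : ℝ) - α = 1 + -α by ring,
      Real.rpow_one_add' hsα.le (by intro h; nlinarith)]
  have hPle : (s + α) ^ (-α) ≤ 1 / (8 * (|x| + 1)) := by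
    have h1 : (8 * (|x| + 1)) ≤ (s + α) ^ α := by
      calc (8 * (|x| + 1)) = K ^ α := by
            rw [hK, ← Real.rpow_mul (by linarith), inv_mul_cancel₀ hα0.ne', Real.rpow_one]
      _ ≤ (s + α) ^ α := Real.rpow_le_rpow (by positivity) (by linarith) hα0.le
    rw [Real.rpow_neg hsα.le, one_div]
    gcongr
  have hGratio : Real.Gamma s ≤ (s + α) ^ (1 - α) / s * Real.Gamma (s + α) :=
    caputo_gamma_lower hα0 hα1 hs
  have hnorm : ∀ k : ℕ, ‖((k:ℝ) + 1) * |x| ^ k / Real.Gamma (α * k + b)‖ =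
      ((k:ℝ) + 1) * |x| ^ k / Real.Gamma (α * k + b) :=
    fun k => Real.norm_of_nonneg (div_nonneg (by positivity) (hGpos k).le)
  rw [hnorm, hnorm, hexp, hsdef]
  have ha1 : ((m + 1 : ℕ) : ℝ) + 1 = (m : ℝ) + 2 := by push_cast; ring
  rw [ha1]
  have hxpow : |x| ^ (m + 1) = |x| ^ m * |x| := pow_succ _ _
  rw [hxpow]
  -- goal : (m+2) * (|x|^m * |x|) / Γ(s+α) ≤ 1/2 * ((m+1) * |x|^m / Γ s)
  have hinv : (Real.Gamma (s+α))⁻¹ ≤ (s + α) ^ (1 - α) / (s * Real.Gamma s) := by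
    rw [← one_div, div_le_div_iff₀ hGsα (by positivity), one_mul]
    have h2 : s * Real.Gamma s ≤ s * ((s + α) ^ (1 - α) / s * Real.Gamma (s + α)) :=
      mul_le_mul_of_nonneg_left hGratio hs.le
    calc s * Real.Gamma s ≤ s * ((s + α) ^ (1 - α) / s * Real.Gamma (s + α)) := h2
    _ = (s + α) ^ (1 - α) * Real.Gamma (s + α) := by field_simp
  have step1 : ((m:ℝ) + 2) * (|x| ^ m * |x|) / Real.Gamma (s + α)
      ≤ ((m:ℝ) + 2) * (|x| ^ m * |x|) * ((s + α) ^ (1 - α) / (s * Real.Gamma s)) := by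
    rw [div_eq_mul_inv]
    exact mul_le_mul_of_nonneg_left hinv (by positivity)
  refine step1.trans ?_
  have hcore : ((m:ℝ) + 2) * |x| * (s + α) ^ (1 - α) / s ≤ 1/2 * ((m:ℝ)+1) := by
    rw [hP]
    have hsα2s : s + α ≤ 2 * s := by linarith
    have hb1 : ((m:ℝ) + 2) * |x| * ((s + α) * (s + α) ^ (-α)) ≤
        ((m:ℝ) + 2) * |x| * ((2*s) * (1 / (8 * (|x| + 1)))) := by
      apply mul_le_mul_of_nonneg_left _ (by positivity)
      apply mul_le_mul hsα2s hPle (by positivity) (by positivity)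
    rw [div_le_iff₀ hs]
    refine hb1.trans ?_
    have h2 : ((m:ℝ) + 2) ≤ 2 * ((m:ℝ) + 1) := by
      have : (0:ℝ) ≤ m := Nat.cast_nonneg m; linarith
    have hxnn := abs_nonneg x
    have hx1 : (0:ℝ) < |x| + 1 := by linarith
    have hI : |x| * (8 * (|x|+1))⁻¹ ≤ 8⁻¹ := by
      have : (8 * (|x|+1))⁻¹ * (|x| + 1) = 8⁻¹ := by field_simp
      rw [← this]
      calc |x| * (8 * (|x|+1))⁻¹ ≤ (|x| + 1) * (8 * (|x|+1))⁻¹ := by gcongr; linarith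
      _ = (8 * (|x|+1))⁻¹ * (|x| + 1) := by ring
    have hbig := mul_le_mul_of_nonneg_left hI
      (by positivity : (0:ℝ) ≤ ((m:ℝ)+2) * (2*s))
    have h3 := mul_le_mul_of_nonneg_right h2 hs.le
    rw [one_div]
    nlinarith [hbig, h3, hs.le]
  calc ((m:ℝ) + 2) * (|x| ^ m * |x|) * ((s + α) ^ (1 - α) / (s * Real.Gamma s))
      = (((m:ℝ) + 2) * |x| * (s + α) ^ (1 - α) / s) * (|x| ^ m / Real.Gamma s) := by
        field_simp
  _ ≤ (1/2 * ((m:ℝ)+1)) * (|x| ^ m / Real.Gamma s) :=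
        mul_le_mul_of_nonneg_right hcore (by positivity)
  _ = 1/2 * (((m:ℝ) + 1) * |x| ^ m / Real.Gamma s) := by ring

/-- Integrability of the Beta-type integrand. -/
private lemma caputo_betaIntegrable {u v t : ℝ} (hu : 0 < u) (hv : 0 < v) (ht : 0 < t) :
    IntervalIntegrable (fun τ => (t - τ) ^ (u - 1) * τ ^ (v - 1)) volume 0 t := by
  have h2 : (0:ℝ) < t/2 := by linarith
  have piece1 : IntervalIntegrable (fun τ => (t - τ) ^ (u - 1) * τ ^ (v - 1)) volume 0 (t/2) := by
    have hf : IntervalIntegrable (fun τ : ℝ => τ ^ (v - 1)) volume 0 (t/2) :=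
      intervalIntegral.intervalIntegrable_rpow' (by linarith)
    have hg : ContinuousOn (fun τ : ℝ => (t - τ) ^ (u - 1)) (Set.uIcc 0 (t/2)) := by
      apply ContinuousOn.rpow_const (by fun_prop)
      intro x hx
      rw [Set.uIcc_of_le h2.le] at hx
      left
      have : x ≤ t/2 := hx.2
      intro h; nlinarith [sub_eq_zero.mp h]
    exact hf.continuousOn_mul hg
  have piece2 : IntervalIntegrable (fun τ => (t - τ) ^ (u - 1) * τ ^ (v - 1)) volume (t/2) t := by
    have hf0 : IntervalIntegrable (fun τ : ℝ => τ ^ (u - 1)) volume 0 (t/2) :=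
      intervalIntegral.intervalIntegrable_rpow' (by linarith)
    have hf : IntervalIntegrable (fun τ : ℝ => (t - τ) ^ (u - 1)) volume (t/2) t := by
      have := (hf0.comp_sub_left t).symm
      simpa [sub_half] using this
    have hg : ContinuousOn (fun τ : ℝ => τ ^ (v - 1)) (Set.uIcc (t/2) t) := by
      apply ContinuousOn.rpow_const (by fun_prop)
      intro x hx
      rw [Set.uIcc_of_le (by linarith)] at hx
      left; nlinarith [hx.1]
    exact hf.mul_continuousOn hg
  exact piece1.trans piece2

/-- Value of the Beta-type integral. -/
private lemma caputo_betaValue {u v t : ℝ} (hu : 0 < u) (hv : 0 < v) (ht : 0 < t) :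
    ∫ τ in (0:ℝ)..t, (t - τ) ^ (u - 1) * τ ^ (v - 1) =
      Real.Gamma u * Real.Gamma v / Real.Gamma (u + v) * t ^ (u + v - 1) := by
  have hscaled := Complex.betaIntegral_scaled (v : ℂ) (u : ℂ) ht
  -- hscaled : ∫ x in 0..t, (x:ℂ)^((v:ℂ)-1) * ((t:ℂ)-x)^((u:ℂ)-1) = (t:ℂ)^((v:ℂ)+(u:ℂ)-1) * betaIntegral v u
  have hbeta : Complex.betaIntegral (v : ℂ) (u : ℂ) =
      ((Real.Gamma u * Real.Gamma v / Real.Gamma (u + v) : ℝ) : ℂ) := by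
    have hGG := Complex.Gamma_mul_Gamma_eq_betaIntegral
      (by simpa using hv : 0 < (v:ℂ).re) (by simpa using hu : 0 < (u:ℂ).re)
    have hGne : Complex.Gamma ((v:ℂ) + (u:ℂ)) ≠ 0 := by
      rw [show (v:ℂ) + (u:ℂ) = ((v + u : ℝ) : ℂ) by push_cast; ring, Complex.Gamma_ofReal]
      exact_mod_cast (Real.Gamma_pos_of_pos (by linarith)).ne'
    rw [show (v:ℂ) + (u:ℂ) = ((v + u : ℝ) : ℂ) by push_cast; ring] at hGG
    rw [Complex.Gamma_ofReal, Complex.Gamma_ofReal, Complex.Gamma_ofReal] at hGG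
    have hne : ((Real.Gamma (v + u) : ℝ) : ℂ) ≠ 0 := by
      exact_mod_cast (Real.Gamma_pos_of_pos (by linarith : (0:ℝ) < v + u)).ne'
    rw [show u + v = v + u from add_comm u v, Complex.ofReal_div, Complex.ofReal_mul,
      eq_div_iff hne]
    linear_combination -hGG
  -- rewrite LHS of hscaled as ofReal of the real integral
  have hLHS : (∫ x in (0:ℝ)..t, (x:ℂ) ^ ((v:ℂ) - 1) * ((t:ℂ) - (x:ℂ)) ^ ((u:ℂ) - 1)) =
      ((∫ τ in (0:ℝ)..t, (t - τ) ^ (u - 1) * τ ^ (v - 1) : ℝ) : ℂ) := by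
    rw [← intervalIntegral.integral_ofReal]
    rw [intervalIntegral.integral_of_le ht.le, intervalIntegral.integral_of_le ht.le]
    apply setIntegral_congr_fun measurableSet_Ioc
    intro x hx
    simp only []
    have hx0 : (0:ℝ) ≤ x := hx.1.le
    have htx : (0:ℝ) ≤ t - x := by linarith [hx.2]
    rw [Complex.ofReal_mul, Complex.ofReal_cpow hx0, Complex.ofReal_cpow htx]
    push_cast
    ring
  rw [hLHS] at hscaled
  have hRHS : ((t:ℂ)) ^ ((v:ℂ) + (u:ℂ) - 1) = ((t ^ (u + v - 1) : ℝ) : ℂ) := by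
    rw [Complex.ofReal_cpow ht.le]
    congr 1
    push_cast
    ring
  rw [hRHS, hbeta, ← Complex.ofReal_mul] at hscaled
  have := Complex.ofReal_inj.mp hscaled
  rw [this]; ring

private noncomputable def mlg (α lam : ℝ) (m : ℕ) (τ : ℝ) : ℝ :=
  lam ^ m * τ ^ (α * m) / Real.Gamma (α * m + 1)

private noncomputable def mld (α lam : ℝ) (m : ℕ) (τ : ℝ) : ℝ :=
  lam ^ m * (α * m * τ ^ (α * m - 1)) / Real.Gamma (α * m + 1)

private lemma mlg_eq {α lam : ℝ} (m : ℕ) {x : ℝ} (hx : 0 < x) :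
    mlg α lam m x = (lam * x ^ α) ^ m / Real.Gamma (α * m + 1) := by
  rw [mlg, mul_pow, ← Real.rpow_natCast (x ^ α) m, ← Real.rpow_mul hx.le]

private lemma summable_mlg {α : ℝ} (hα0 : 0 < α) (hα1 : α < 1) (lam : ℝ) {x : ℝ} (hx : 0 < x) :
    Summable (fun m => mlg α lam m x) := by
  apply Summable.of_norm
  apply Summable.of_nonneg_of_le (fun m => norm_nonneg _)
    (fun m => ?_) (caputo_ml_summable hα0 hα1 one_pos (lam * x ^ α))
  have hG : 0 < Real.Gamma (α * m + 1) := Real.Gamma_pos_of_pos (by positivity)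
  rw [mlg_eq m hx, Real.norm_eq_abs, abs_div, abs_of_pos hG, abs_pow]
  have h1 : |lam * x ^ α| ^ m ≤ ((m:ℝ) + 1) * |lam * x ^ α| ^ m :=
    le_mul_of_one_le_left (pow_nonneg (abs_nonneg _) m)
      (by linarith [Nat.cast_nonneg (α := ℝ) m])
  exact (div_le_div_iff_of_pos_right hG).mpr h1

private lemma hasDerivAt_mlg {α lam : ℝ} (m : ℕ) {x : ℝ} (hx : 0 < x) :
    HasDerivAt (mlg α lam m) (mld α lam m x) x := by
  have h := Real.hasDerivAt_rpow_const (p := α * m) (x := x) (Or.inl hx.ne')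
  exact (h.const_mul (lam ^ m)).div_const (Real.Gamma (α * m + 1))

/-- Term-by-term differentiation of the Mittag-Leffler series. -/
private lemma hasDerivAt_ml {α : ℝ} (hα0 : 0 < α) (hα1 : α < 1) (lam C : ℝ) {t : ℝ} (ht : 0 < t) :
    HasDerivAt (fun τ => C * mlE α 1 (lam * τ ^ α)) (C * ∑' m, mld α lam m t) t := by
  have hc1 : (0:ℝ) < t/2 := by linarith
  have hc2 : (0:ℝ) < t + 1 := by linarith
  set u : ℕ → ℝ := fun m =>
    (α / (t/2)) * (((m:ℝ)+1) * |lam * (t/2) ^ α| ^ m / Real.Gamma (α * m + 1)) +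
    (α / (t+1)) * (((m:ℝ)+1) * |lam * (t+1) ^ α| ^ m / Real.Gamma (α * m + 1)) with hu_def
  have hu : Summable u :=
    ((caputo_ml_summable hα0 hα1 one_pos (lam * (t/2) ^ α)).mul_left _).add
      ((caputo_ml_summable hα0 hα1 one_pos (lam * (t+1) ^ α)).mul_left _)
  have hmem : t ∈ Set.Ioo (t/2) (t+1) := ⟨by linarith, by linarith⟩
  have hbound : ∀ (m : ℕ), ∀ x ∈ Set.Ioo (t/2) (t+1), ‖mld α lam m x‖ ≤ u m := by
    intro m x hx
    have hx0 : 0 < x := lt_trans hc1 hx.1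
    have hGpos : 0 < Real.Gamma (α * m + 1) := Real.Gamma_pos_of_pos (by positivity)
    have hxa : x ^ (α * m - 1) ≤ (t/2) ^ (α * m - 1) + (t+1) ^ (α * m - 1) := by
      by_cases hcase : α * m - 1 ≤ 0
      · have h1 : x ^ (α * m - 1) ≤ (t/2) ^ (α * m - 1) :=
          Real.rpow_le_rpow_of_nonpos hc1 hx.1.le hcase
        have h2 : (0:ℝ) ≤ (t+1) ^ (α * m - 1) := Real.rpow_nonneg hc2.le _
        linarith
      · have h1 : x ^ (α * m - 1) ≤ (t+1) ^ (α * m - 1) :=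
          Real.rpow_le_rpow hx0.le hx.2.le (by linarith)
        have h2 : (0:ℝ) ≤ (t/2) ^ (α * m - 1) := Real.rpow_nonneg hc1.le _
        linarith
    have hnorm : ‖mld α lam m x‖ = |lam| ^ m * (α * m * x ^ (α * m - 1)) /
        Real.Gamma (α * m + 1) := by
      rw [mld, Real.norm_eq_abs, abs_div, abs_of_pos hGpos, abs_mul, abs_pow, abs_mul]
      congr 2
      rw [abs_of_nonneg (by positivity : (0:ℝ) ≤ α * m),
        abs_of_pos (Real.rpow_pos_of_pos hx0 _)]
    rw [hnorm]
    have key : ∀ c : ℝ, 0 < c →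
        |lam| ^ m * (α * m * c ^ (α * m - 1)) / Real.Gamma (α * m + 1) ≤
        (α / c) * (((m:ℝ)+1) * |lam * c ^ α| ^ m / Real.Gamma (α * m + 1)) := by
      intro c hc
      have hca : c ^ (α * m - 1) = (c ^ α) ^ m / c := by
        rw [← Real.rpow_natCast (c ^ α) m, ← Real.rpow_mul hc.le,
          Real.rpow_sub hc, Real.rpow_one]
      have habs : |lam * c ^ α| ^ m = |lam| ^ m * (c ^ α) ^ m := by
        rw [abs_mul, mul_pow, abs_of_pos (Real.rpow_pos_of_pos hc _)]
      rw [hca, habs]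
      have heq : |lam| ^ m * (α * m * ((c ^ α) ^ m / c)) / Real.Gamma (α * m + 1) =
          (α / c) * ((m:ℝ) * (|lam| ^ m * (c ^ α) ^ m) / Real.Gamma (α * m + 1)) := by
        field_simp
      rw [heq]
      apply mul_le_mul_of_nonneg_left _ (by positivity)
      have hP : (0:ℝ) ≤ |lam| ^ m * (c ^ α) ^ m := by positivity
      exact (div_le_div_iff_of_pos_right hGpos).mpr
        (mul_le_mul_of_nonneg_right (by linarith [Nat.cast_nonneg (α := ℝ) m]) hP)
    calc |lam| ^ m * (α * m * x ^ (α * m - 1)) / Real.Gamma (α * m + 1)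
        ≤ |lam| ^ m * (α * m * ((t/2) ^ (α * m - 1) + (t+1) ^ (α * m - 1))) /
            Real.Gamma (α * m + 1) := by gcongr <;> positivity
      _ = |lam| ^ m * (α * m * (t/2) ^ (α * m - 1)) / Real.Gamma (α * m + 1)
          + |lam| ^ m * (α * m * (t+1) ^ (α * m - 1)) / Real.Gamma (α * m + 1) := by ring
      _ ≤ u m := add_le_add (key _ hc1) (key _ hc2)
  have hder := hasDerivAt_tsum_of_isPreconnected hu isOpen_Ioo isPreconnected_Ioo
    (fun m x hx => hasDerivAt_mlg m (lt_trans hc1 hx.1)) hbound hmem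
    (summable_mlg hα0 hα1 lam ht) hmem
  have hder2 := hder.const_mul C
  apply hder2.congr_of_eventuallyEq
  filter_upwards [Ioo_mem_nhds hmem.1 hmem.2] with x hx
  have hx0 : 0 < x := lt_trans hc1 hx.1
  simp only [mlE]
  congr 1
  exact tsum_congr fun m => (mlg_eq m hx0).symm

/-- algebraic simplification of the term values -/
private lemma caputo_term_simp {α : ℝ} (h0 : 0 < α) (h1 : α < 1) (c l : ℝ) {t : ℝ} (ht : 0 < t)
    (m : ℕ) (hm : m ≠ 0) :
    (c * l ^ m * (α * m) / Real.Gamma (α * m + 1)) *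
      (Real.Gamma (1-α) * Real.Gamma (α*m) / Real.Gamma (1-α+α*m) * t ^ (1-α+α*m-1)) =
    (c * Real.Gamma (1-α)) * (l ^ m * ((t ^ α) ^ m * t ^ (-α)) / Real.Gamma (α*m + (1-α))) := by
  have hv : 0 < α * m := mul_pos h0 (by exact_mod_cast Nat.pos_of_ne_zero hm)
  have hΓv : 0 < Real.Gamma (α*m) := Real.Gamma_pos_of_pos hv
  have hΓs : 0 < Real.Gamma (1-α+α*m) := Real.Gamma_pos_of_pos (by linarith)
  have hrec : Real.Gamma (α*m + 1) = (α*m) * Real.Gamma (α*m) := Real.Gamma_add_one hv.ne'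
  have hpow : t ^ (1-α+α*m-1) = (t ^ α) ^ m * t ^ (-α) := by
    rw [← Real.rpow_natCast (t ^ α) m, ← Real.rpow_mul ht.le, ← Real.rpow_add ht]
    congr 1; ring
  have hcomm : Real.Gamma (α*m + (1-α)) = Real.Gamma (1-α+α*m) := by rw [add_comm]
  rw [hpow, hcomm, hrec]
  field_simp


/-- `y(t) = C E_{α,1}(λ t^α)` solves the fractional relaxation equation with the
Caputo fractional derivative `(∗D^α_{0+} y)(t) = (I^{1−α}_{0+} y′)(t)` and `y(0) = C`. -/
theorem caputo_relaxation_solution (α lam C : ℝ) (h0 : 0 < α) (h1 : α < 1) :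
    let y : ℝ → ℝ := fun t => C * mlE α 1 (lam * t ^ α)
    (∀ t, 0 < t → DifferentiableAt ℝ y t) ∧
    y 0 = C ∧
    (∀ t, 0 < t → rlInt (1 - α) (deriv y) t = lam * y t) := by
  intro y
  have hα' : (0:ℝ) < 1 - α := by linarith
  have hΓα' : (0:ℝ) < Real.Gamma (1 - α) := Real.Gamma_pos_of_pos hα'
  refine ⟨fun t ht => (hasDerivAt_ml h0 h1 lam C ht).differentiableAt, ?_, ?_⟩
  · -- y 0 = C
    show C * mlE α 1 (lam * (0:ℝ) ^ α) = C
    rw [Real.zero_rpow h0.ne', mul_zero, mlE]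
    rw [tsum_eq_single 0 (fun m hm => by rw [zero_pow hm, zero_div])]
    norm_num [Real.Gamma_one]
  · intro t ht
    have hderiv : ∀ τ : ℝ, 0 < τ → deriv y τ = C * ∑' m, mld α lam m τ :=
      fun τ hτ => (hasDerivAt_ml h0 h1 lam C hτ).deriv
    set F : ℕ → ℝ → ℝ := fun m τ => (t - τ) ^ (1 - α - 1) * (C * mld α lam m τ) with hF
    set K : ℕ → ℝ := fun m => C * lam ^ m * (α * m) / Real.Gamma (α * m + 1) with hK
    have hFeq : ∀ m : ℕ, F m = fun τ => K m * ((t - τ) ^ (1 - α - 1) * τ ^ (α * m - 1)) := by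
      intro m; funext τ; rw [hF, hK]; simp only [mld]; ring
    have hF0 : F 0 = fun _ => (0:ℝ) := by
      funext τ; rw [hF]; simp [mld]
    have hGm : ∀ m : ℕ, 0 < Real.Gamma (α * m + 1) := fun m =>
      Real.Gamma_pos_of_pos (by positivity)
    have hvpos : ∀ m : ℕ, m ≠ 0 → 0 < α * m := fun m hm =>
      mul_pos h0 (by exact_mod_cast Nat.pos_of_ne_zero hm)
    have hGm' : ∀ m : ℕ, 0 < Real.Gamma (α * m + (1 - α)) := fun m =>
      Real.Gamma_pos_of_pos (by have : (0:ℝ) ≤ (m:ℝ) := Nat.cast_nonneg m; nlinarith)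
    -- integrability of each term
    have hint : ∀ m : ℕ, Integrable (F m) (volume.restrict (Set.Ioc 0 t)) := by
      intro m
      match m with
      | 0 => rw [hF0]; exact integrable_zero _ _ _
      | (m+1) =>
        rw [hFeq]
        have hb := caputo_betaIntegrable hα' (hvpos (m+1) (Nat.succ_ne_zero m)) ht
        rw [intervalIntegrable_iff_integrableOn_Ioc_of_le ht.le] at hb
        exact hb.const_mul _
    -- exact value of the base integrals
    have hbase : ∀ m : ℕ, m ≠ 0 → (∫ τ in Set.Ioc 0 t, (t - τ) ^ (1 - α - 1) * τ ^ (α * m - 1)) =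
        Real.Gamma (1-α) * Real.Gamma (α*m) / Real.Gamma (1-α+α*m) * t ^ (1-α+α*m-1) := by
      intro m hm
      rw [← intervalIntegral.integral_of_le ht.le]
      exact caputo_betaValue hα' (hvpos m hm) ht
    have hval : ∀ m : ℕ, m ≠ 0 → (∫ τ in Set.Ioc 0 t, F m τ) =
        K m * (Real.Gamma (1-α) * Real.Gamma (α*m) / Real.Gamma (1-α+α*m) *
          t ^ (1-α+α*m-1)) := by
      intro m hm
      simp only [hFeq]
      rw [MeasureTheory.integral_const_mul, hbase m hm]
    -- norms of the integrals
    have hnorm : ∀ m : ℕ, (∫ τ in Set.Ioc 0 t, ‖F m τ‖) =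
        |K m| * ∫ τ in Set.Ioc 0 t, (t - τ) ^ (1 - α - 1) * τ ^ (α * m - 1) := by
      intro m
      rw [← MeasureTheory.integral_const_mul]
      apply setIntegral_congr_fun measurableSet_Ioc
      intro τ hτ
      simp only [hFeq]
      rw [Real.norm_eq_abs, abs_mul, abs_of_nonneg (mul_nonneg
        (Real.rpow_nonneg (by linarith [hτ.2] : (0:ℝ) ≤ t - τ) _)
        (Real.rpow_nonneg hτ.1.le _))]
    have hKabs : ∀ m : ℕ, |K m| = |C| * |lam| ^ m * (α * m) / Real.Gamma (α * m + 1) := by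
      intro m
      rw [hK]
      simp only []
      rw [abs_div, abs_of_pos (hGm m), abs_mul, abs_mul, abs_pow,
        abs_of_nonneg (by positivity : (0:ℝ) ≤ α * m)]
    -- summability of the integral norms
    set B : ℕ → ℝ := fun m => (|C| * Real.Gamma (1-α) * t ^ (-α)) *
      (((m:ℝ)+1) * |lam * t ^ α| ^ m / Real.Gamma (α * m + (1-α))) with hB
    have hBsum : Summable B := (caputo_ml_summable h0 h1 hα' (lam * t ^ α)).mul_left _
    have habs_pow : ∀ m : ℕ, |lam| ^ m * (t ^ α) ^ m = |lam * t ^ α| ^ m := by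
      intro m
      rw [abs_mul, mul_pow, abs_of_pos (Real.rpow_pos_of_pos ht _)]
    have hintnorm : Summable (fun m => ∫ τ in Set.Ioc 0 t, ‖F m τ‖) := by
      apply Summable.of_nonneg_of_le
        (fun m => integral_nonneg fun τ => norm_nonneg _) _ hBsum
      intro m
      match m with
      | 0 =>
        rw [hF0]
        simp only [norm_zero, integral_zero]
        rw [hB]
        have h1' : (0:ℝ) ≤ |C| * Real.Gamma (1-α) * t ^ (-α) := by positivity
        have h2' : (0:ℝ) ≤ ((0:ℕ):ℝ)+1 := by norm_num
        positivity
      | (m+1) =>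
        rw [hnorm, hbase (m+1) (Nat.succ_ne_zero m), hKabs,
          caputo_term_simp h0 h1 |C| |lam| ht (m+1) (Nat.succ_ne_zero m)]
        rw [hB]
        simp only []
        have hn := habs_pow (m+1)
        have hP : (0:ℝ) ≤ |lam * t ^ α| ^ (m+1) := pow_nonneg (abs_nonneg _) _
        calc |C| * Real.Gamma (1-α) * (|lam| ^ (m+1) * ((t ^ α) ^ (m+1) * t ^ (-α)) /
              Real.Gamma (α * (m+1:ℕ) + (1-α)))
            = (|C| * Real.Gamma (1-α) * t ^ (-α)) *
              ((|lam| ^ (m+1) * (t ^ α) ^ (m+1)) / Real.Gamma (α * (m+1:ℕ) + (1-α))) := by ring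
          _ = (|C| * Real.Gamma (1-α) * t ^ (-α)) *
              (|lam * t ^ α| ^ (m+1) / Real.Gamma (α * (m+1:ℕ) + (1-α))) := by rw [hn]
          _ ≤ (|C| * Real.Gamma (1-α) * t ^ (-α)) *
              ((((m+1:ℕ):ℝ)+1) * |lam * t ^ α| ^ (m+1) / Real.Gamma (α * (m+1:ℕ) + (1-α))) := by
              apply mul_le_mul_of_nonneg_left _ (by positivity)
              apply (div_le_div_iff_of_pos_right (hGm' (m+1))).mpr
              exact le_mul_of_one_le_left hP (by linarith [Nat.cast_nonneg (α := ℝ) (m+1)])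
    -- swap sum and integral
    have hswap := integral_tsum_of_summable_integral_norm hint hintnorm
    -- value of each term
    have hterm : ∀ m : ℕ, (∫ τ in Set.Ioc 0 t, F (m+1) τ) =
        (C * Real.Gamma (1-α) * lam) * ((lam * t ^ α) ^ m / Real.Gamma (α * m + 1)) := by
      intro m
      rw [hval (m+1) (Nat.succ_ne_zero m), hK]
      simp only []
      rw [caputo_term_simp h0 h1 C lam ht (m+1) (Nat.succ_ne_zero m)]
      have e1 : α * ((m+1:ℕ):ℝ) + (1-α) = α * m + 1 := by push_cast; ring
      have e2 : (t ^ α) ^ (m+1) * t ^ (-α) = (t ^ α) ^ m := by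
        rw [pow_succ, mul_assoc, ← Real.rpow_add ht]
        simp
      have e3 : lam ^ (m+1) * (t ^ α) ^ m = lam * (lam * t ^ α) ^ m := by
        rw [pow_succ, mul_pow]; ring
      rw [e1, e2]
      rw [show lam ^ (m+1) * ((t^α)^m) / Real.Gamma (α*m+1) =
        (lam * (lam * t ^ α) ^ m) / Real.Gamma (α*m+1) by rw [e3]]
      ring
    -- summability of the integrals themselves
    have hsummableI : Summable (fun m => ∫ τ in Set.Ioc 0 t, F m τ) :=
      Summable.of_norm_bounded hintnorm (fun m => norm_integral_le_integral_norm _)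
    -- put everything together
    have hIeq : (∫ τ in (0:ℝ)..t, (t - τ) ^ (1 - α - 1) * deriv y τ) =
        ∑' m, ∫ τ in Set.Ioc 0 t, F m τ := by
      rw [intervalIntegral.integral_of_le ht.le, hswap]
      apply setIntegral_congr_fun measurableSet_Ioc
      intro τ hτ
      simp only [hF]
      rw [hderiv τ hτ.1]
      rw [← tsum_mul_left, ← tsum_mul_left]
    show (1 / Real.Gamma (1-α)) * (∫ τ in (0:ℝ)..t, (t - τ) ^ (1 - α - 1) * deriv y τ) =
      lam * y t
    rw [hIeq, Summable.tsum_eq_zero_add hsummableI]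
    rw [hF0]
    simp only [integral_zero, zero_add]
    rw [tsum_congr hterm, tsum_mul_left]
    show (1 / Real.Gamma (1-α)) * ((C * Real.Gamma (1-α) * lam) *
      mlE α 1 (lam * t ^ α)) = lam * (C * mlE α 1 (lam * t ^ α))
    field_simp
end
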